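/- arXiv:2601.19841 — 2 statements merged into one kernel-verified Lean document; each statement's English description precedes it below -/
import Mathlib

section
/- Let f₁, f₂, g₁, g₂ : ℂ → ℂ be holomorphic functions on a connected open set such that ⟨f₁,g₁⟩ + ⟨f₂,g₂⟩ = 0 identically, where ⟨·,·⟩ is the real inner product on ℂ. If (f₁, f₂) is not identically zero and f₁, f₂ are linearly independent, then there exist real constants c₁, c₂ and a complex constant z₁ such that g₁ = i c₁ f₁ − conj(z₁) f₂ and g₂ = z₁ f₁ + i c₂ f₂. -/
/-!
View `f = (f₁, f₂)` and `g = (g₁, g₂)` as holomorphic maps into `ℂ²`; the hypothesis says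
`⟪f z, g z⟫ + ⟪g z, f z⟫ = 0`. The Wirtinger derivative `∂` kills the antiholomorphic factors, so
applying it `n` times gives `⟪f z, g⁽ⁿ⁾ z⟫ + ⟪g z, f⁽ⁿ⁾ z⟫ = 0`; by the identity theorem in the
second variable this polarizes to `⟪f z, g w⟫ + ⟪g z, f w⟫ = 0` for all `z, w`. Choosing `z, z'`
with `f z, f z'` independent, Cramer's rule gives `g = A f` for a constant matrix `A`, and
substituting back, the independence of `f₁, f₂` forces `A + A* = 0`.
-/

open Complex

/-- The real inner product on ℂ. -/
noncomputable def rip (a b : ℂ) : ℝ := a.re * b.re + a.im * b.im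

open ComplexConjugate Filter Topology InnerProductSpace

theorem Complex.eq_zero_of_forall_mul_add_mul_conj_eq_zero {p q : ℂ}
    (h : ∀ w, p * w + q * conj w = 0) : p = 0 := by
  have h₁ := h 1
  have hI := h I
  simp only [map_one, mul_one, conj_I] at h₁ hI
  have : 2 * I * p = 0 := by linear_combination I * h₁ + hI
  simpa [I_ne_zero] using this

theorem Complex.eq_I_mul_im_of_add_conj_eq_zero {a : ℂ} (h : a + conj a = 0) : a = I * a.im := by
  have hre : a.re = 0 := by simpa using congrArg re h
  apply Complex.ext <;> simp [hre]

theorem ContinuousLinearMap.iteratedDeriv_comp_left {𝕜 F G : Type*} [NontriviallyNormedField 𝕜]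
    [NormedAddCommGroup F] [NormedSpace 𝕜 F] [NormedAddCommGroup G] [NormedSpace 𝕜 G]
    (L : F →L[𝕜] G) {f : 𝕜 → F} {x : 𝕜} {n : ℕ} (hf : ContDiffAt 𝕜 n f x) :
    iteratedDeriv n (fun y => L (f y)) x = L (iteratedDeriv n f x) := by
  simp [iteratedDeriv_eq_iteratedFDeriv, ← Function.comp_def, L.iteratedFDeriv_comp_left hf le_rfl]

theorem AnalyticAt.eventuallyEq_zero_of_forall_iteratedDeriv_eq_zero {𝕜 F : Type*}
    [NontriviallyNormedField 𝕜] [CharZero 𝕜] [NormedAddCommGroup F] [NormedSpace 𝕜 F]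
    [CompleteSpace F] {f : 𝕜 → F} {x : 𝕜} (hf : AnalyticAt 𝕜 f x)
    (h : ∀ n, iteratedDeriv n f x = 0) : f =ᶠ[𝓝 x] 0 :=
  analyticOrderAt_eq_top.mp <| ENat.eq_top_iff_forall_ge.mpr fun _ =>
    (natCast_le_analyticOrderAt_iff_iteratedDeriv_eq_zero hf).mpr fun i _ => h i

section Polarization

variable {E : Type*} [NormedAddCommGroup E] [InnerProductSpace ℂ E] {U : Set ℂ}

/- The real derivative of the vanishing function is `h ↦ p * h + q * conj h` with `p` the
left-hand side of the conclusion: the factors `u`, `a` in the conjugate-linear slot only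
contribute to `q`. -/
theorem inner_add_inner_deriv_eq_zero (hU : IsOpen U) {u a b c : ℂ → E}
    (hu : DifferentiableOn ℂ u U) (ha : DifferentiableOn ℂ a U)
    (hb : DifferentiableOn ℂ b U) (hc : DifferentiableOn ℂ c U)
    (h : ∀ z ∈ U, ⟪u z, b z⟫_ℂ + ⟪a z, c z⟫_ℂ = 0) {z : ℂ} (hz : z ∈ U) :
    ⟪u z, deriv b z⟫_ℂ + ⟪a z, deriv c z⟫_ℂ = 0 := by
  have hd {v : ℂ → E} (hv : DifferentiableOn ℂ v U) :=
    (hv.differentiableAt (hU.mem_nhds hz)).hasDerivAt.hasFDerivAt.restrictScalars ℝ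
  have hL := ((hd hu).inner ℂ (hd hb)).add ((hd ha).inner ℂ (hd hc))
  have h₀ : HasFDerivAt (fun w => ⟪u w, b w⟫_ℂ + ⟪a w, c w⟫_ℂ) (0 : ℂ →L[ℝ] ℂ) z :=
    (hasFDerivAt_const 0 z).congr_of_eventuallyEq (eventually_of_mem (hU.mem_nhds hz) h)
  refine eq_zero_of_forall_mul_add_mul_conj_eq_zero
    (q := ⟪deriv u z, b z⟫_ℂ + ⟪deriv a z, c z⟫_ℂ) fun w => ?_
  have := congrArg (· w) (hL.unique h₀)
  simp only [add_apply, ContinuousLinearMap.comp_apply,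
    ContinuousLinearMap.prod_apply, ContinuousLinearMap.coe_restrictScalars',
    ContinuousLinearMap.toSpanSingleton_apply, fderivInnerCLM_apply, inner_smul_right,
    inner_smul_left, zero_apply] at this
  linear_combination this

variable [CompleteSpace E]

theorem DifferentiableOn.iteratedDeriv_of_isOpen {f : ℂ → E} (hf : DifferentiableOn ℂ f U)
    (hU : IsOpen U) (n : ℕ) : DifferentiableOn ℂ (iteratedDeriv n f) U := by
  rw [iteratedDeriv_eq_iterate]
  exact ((hf.analyticOnNhd hU).iterated_deriv n).differentiableOn

theorem inner_add_inner_iteratedDeriv_eq_zero (hU : IsOpen U) {u a b c : ℂ → E}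
    (hu : DifferentiableOn ℂ u U) (ha : DifferentiableOn ℂ a U)
    (hb : DifferentiableOn ℂ b U) (hc : DifferentiableOn ℂ c U)
    (h : ∀ z ∈ U, ⟪u z, b z⟫_ℂ + ⟪a z, c z⟫_ℂ = 0) (n : ℕ) :
    ∀ z ∈ U, ⟪u z, iteratedDeriv n b z⟫_ℂ + ⟪a z, iteratedDeriv n c z⟫_ℂ = 0 := by
  induction n with
  | zero => simpa using h
  | succ n ih =>
    simp only [iteratedDeriv_succ]
    exact fun z hz => inner_add_inner_deriv_eq_zero hU hu ha (hb.iteratedDeriv_of_isOpen hU n)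
      (hc.iteratedDeriv_of_isOpen hU n) ih hz

theorem inner_add_inner_eq_zero_of_re_inner_eq_zero (hU : IsOpen U) (hUc : IsPreconnected U)
    {f g : ℂ → E} (hf : DifferentiableOn ℂ f U) (hg : DifferentiableOn ℂ g U)
    (h : ∀ z ∈ U, re ⟪f z, g z⟫_ℂ = 0) {z : ℂ} (hz : z ∈ U) :
    ∀ w ∈ U, ⟪f z, g w⟫_ℂ + ⟪g z, f w⟫_ℂ = 0 := by
  have hdiag : ∀ z ∈ U, ⟪f z, g z⟫_ℂ + ⟪g z, f z⟫_ℂ = 0 := fun z hz => by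
    rw [← inner_conj_symm (g z) (f z), add_conj, h z hz]
    simp
  have hφ : AnalyticOnNhd ℂ (fun w => innerSL ℂ (f z) (g w) + innerSL ℂ (g z) (f w)) U :=
    (((innerSL ℂ (f z)).differentiable.comp_differentiableOn hg).add
      ((innerSL ℂ (g z)).differentiable.comp_differentiableOn hf)).analyticOnNhd hU
  refine hφ.eqOn_zero_of_preconnected_of_eventuallyEq_zero hUc hz
    ((hφ z hz).eventuallyEq_zero_of_forall_iteratedDeriv_eq_zero fun n => ?_)
  have hfz := (hf.analyticOnNhd hU z hz).contDiffAt (n := n)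
  have hgz := (hg.analyticOnNhd hU z hz).contDiffAt (n := n)
  rw [iteratedDeriv_fun_add (by fun_prop) (by fun_prop),
    (innerSL ℂ (f z)).iteratedDeriv_comp_left hgz, (innerSL ℂ (g z)).iteratedDeriv_comp_left hfz]
  exact inner_add_inner_iteratedDeriv_eq_zero hU hf hg hg hf hdiag n z hz

end Polarization

section PairOfFunctions

variable {α : Type*} {U : Set α} {f₁ f₂ g₁ g₂ : α → ℂ}

theorem exists_mul_sub_mul_ne_zero
    (hindep : ∀ a b : ℂ, (∀ z ∈ U, a * f₁ z + b * f₂ z = 0) → a = 0 ∧ b = 0) :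
    ∃ z ∈ U, ∃ w ∈ U, f₁ z * f₂ w - f₂ z * f₁ w ≠ 0 := by
  by_contra! h
  have hzero : ∀ z ∈ U, f₂ z = 0 ∧ -f₁ z = 0 := fun z hz =>
    hindep _ _ fun w hw => by linear_combination -h z hz w hw
  exact one_ne_zero (hindep 1 0 fun z hz => by simpa using (hzero z hz).2).1

theorem eq_zero_of_forall_conj_mul_add_mul_eq_zero
    (hindep : ∀ a b : ℂ, (∀ z ∈ U, a * f₁ z + b * f₂ z = 0) → a = 0 ∧ b = 0)
    {B₁₁ B₁₂ B₂₁ B₂₂ : ℂ}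
    (h : ∀ z ∈ U, ∀ w ∈ U, (conj (f₁ z) * B₁₁ + conj (f₂ z) * B₂₁) * f₁ w
      + (conj (f₁ z) * B₁₂ + conj (f₂ z) * B₂₂) * f₂ w = 0) :
    B₁₁ = 0 ∧ B₁₂ = 0 ∧ B₂₁ = 0 ∧ B₂₂ = 0 := by
  have hrow : ∀ z ∈ U, conj (f₁ z) * B₁₁ + conj (f₂ z) * B₂₁ = 0 ∧
      conj (f₁ z) * B₁₂ + conj (f₂ z) * B₂₂ = 0 := fun z hz => hindep _ _ (h z hz)
  have hcol (p q : ℂ) (hpq : ∀ z ∈ U, conj (f₁ z) * p + conj (f₂ z) * q = 0) :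
      p = 0 ∧ q = 0 := by
    simpa using hindep (conj p) (conj q) fun z hz => by
      simpa [mul_comm] using congrArg conj (hpq z hz)
  obtain ⟨h₁₁, h₂₁⟩ := hcol _ _ fun z hz => (hrow z hz).1
  obtain ⟨h₁₂, h₂₂⟩ := hcol _ _ fun z hz => (hrow z hz).2
  exact ⟨h₁₁, h₁₂, h₂₁, h₂₂⟩

theorem exists_eq_mul_add_mul
    (hindep : ∀ a b : ℂ, (∀ z ∈ U, a * f₁ z + b * f₂ z = 0) → a = 0 ∧ b = 0)
    (hpol : ∀ z ∈ U, ∀ w ∈ U,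
      conj (f₁ z) * g₁ w + conj (f₂ z) * g₂ w + (conj (g₁ z) * f₁ w + conj (g₂ z) * f₂ w) = 0) :
    ∃ a b c d : ℂ, ∀ w ∈ U, g₁ w = a * f₁ w + b * f₂ w ∧ g₂ w = c * f₁ w + d * f₂ w := by
  obtain ⟨z, hz, z', hz', hdet⟩ := exists_mul_sub_mul_ne_zero hindep
  set D := conj (f₁ z) * conj (f₂ z') - conj (f₂ z) * conj (f₁ z')
  have hD : D ≠ 0 := by simpa [D] using (map_ne_zero conj).mpr hdet
  -- Cramer's rule for the system `hpol z`, `hpol z'` in the unknowns `g₁ w`, `g₂ w`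
  refine ⟨(conj (f₂ z) * conj (g₁ z') - conj (f₂ z') * conj (g₁ z)) / D,
    (conj (f₂ z) * conj (g₂ z') - conj (f₂ z') * conj (g₂ z)) / D,
    (conj (f₁ z') * conj (g₁ z) - conj (f₁ z) * conj (g₁ z')) / D,
    (conj (f₁ z') * conj (g₂ z) - conj (f₁ z) * conj (g₂ z')) / D, fun w hw => ⟨?_, ?_⟩⟩
  · field_simp
    linear_combination conj (f₂ z') * hpol z hz w hw - conj (f₂ z) * hpol z' hz' w hw
  · field_simp
    linear_combination conj (f₁ z) * hpol z' hz' w hw - conj (f₁ z') * hpol z hz w hw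

theorem exists_skewHermitian_of_forall_conj_mul_add_eq_zero
    (hindep : ∀ a b : ℂ, (∀ z ∈ U, a * f₁ z + b * f₂ z = 0) → a = 0 ∧ b = 0)
    (hpol : ∀ z ∈ U, ∀ w ∈ U,
      conj (f₁ z) * g₁ w + conj (f₂ z) * g₂ w + (conj (g₁ z) * f₁ w + conj (g₂ z) * f₂ w) = 0) :
    ∃ (c₁ c₂ : ℝ) (z₁ : ℂ), ∀ z ∈ U,
      g₁ z = I * c₁ * f₁ z - conj z₁ * f₂ z ∧ g₂ z = z₁ * f₁ z + I * c₂ * f₂ z := by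
  obtain ⟨a, b, c, d, hg⟩ := exists_eq_mul_add_mul hindep hpol
  obtain ⟨ha, hb, -, hd⟩ := eq_zero_of_forall_conj_mul_add_mul_eq_zero hindep
    (B₁₁ := a + conj a) (B₁₂ := b + conj c) (B₂₁ := c + conj b) (B₂₂ := d + conj d)
    fun z hz w hw => by
      have := hpol z hz w hw
      rw [(hg z hz).1, (hg z hz).2, (hg w hw).1, (hg w hw).2] at this
      simp only [map_add, map_mul] at this
      linear_combination this
  refine ⟨a.im, d.im, c, fun z hz => ⟨?_, ?_⟩⟩
  · linear_combination (hg z hz).1 + f₁ z * eq_I_mul_im_of_add_conj_eq_zero ha + f₂ z * hb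
  · linear_combination (hg z hz).2 + f₂ z * eq_I_mul_im_of_add_conj_eq_zero hd

end PairOfFunctions

theorem rip_eq_re_inner (a b : ℂ) : rip a b = re ⟪a, b⟫_ℂ := by
  simp only [rip, RCLike.inner_apply, mul_re, conj_re, conj_im, mul_neg, sub_neg_eq_add]
  ring

theorem stmt_3_general (U : Set ℂ) (hU : IsOpen U) (hUc : IsConnected U)
    (f₁ f₂ g₁ g₂ : ℂ → ℂ)
    (hf₁ : DifferentiableOn ℂ f₁ U) (hf₂ : DifferentiableOn ℂ f₂ U)
    (hg₁ : DifferentiableOn ℂ g₁ U) (hg₂ : DifferentiableOn ℂ g₂ U)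
    (horth : ∀ z ∈ U, rip (f₁ z) (g₁ z) + rip (f₂ z) (g₂ z) = 0)
    (hindep : ∀ a b : ℂ, (∀ z ∈ U, a * f₁ z + b * f₂ z = 0) → a = 0 ∧ b = 0) :
    ∃ (c₁ c₂ : ℝ) (z₁ : ℂ), ∀ z ∈ U,
      g₁ z = I * (c₁ : ℂ) * f₁ z - (starRingEnd ℂ) z₁ * f₂ z ∧
      g₂ z = z₁ * f₁ z + I * (c₂ : ℂ) * f₂ z := by
  let F : ℂ → EuclideanSpace ℂ (Fin 2) := fun z => !₂[f₁ z, f₂ z]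
  let G : ℂ → EuclideanSpace ℂ (Fin 2) := fun z => !₂[g₁ z, g₂ z]
  have hF : DifferentiableOn ℂ F U :=
    differentiableOn_euclidean.mpr (Fin.forall_fin_two.mpr ⟨hf₁, hf₂⟩)
  have hG : DifferentiableOn ℂ G U :=
    differentiableOn_euclidean.mpr (Fin.forall_fin_two.mpr ⟨hg₁, hg₂⟩)
  have hFG : ∀ z ∈ U, re ⟪F z, G z⟫_ℂ = 0 := fun z hz => by
    simpa [F, G, PiLp.inner_apply, Fin.sum_univ_two, rip_eq_re_inner] using horth z hz
  refine exists_skewHermitian_of_forall_conj_mul_add_eq_zero hindep fun z hz w hw => ?_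
  simpa [F, G, PiLp.inner_apply, Fin.sum_univ_two, mul_comm] using
    inner_add_inner_eq_zero_of_re_inner_eq_zero hU hUc.isPreconnected hF hG hFG hz w hw

theorem stmt_3 (U : Set ℂ) (hU : IsOpen U) (hUc : IsConnected U)
    (f₁ f₂ g₁ g₂ : ℂ → ℂ)
    (hf₁ : DifferentiableOn ℂ f₁ U) (hf₂ : DifferentiableOn ℂ f₂ U)
    (hg₁ : DifferentiableOn ℂ g₁ U) (hg₂ : DifferentiableOn ℂ g₂ U)
    (horth : ∀ z ∈ U, rip (f₁ z) (g₁ z) + rip (f₂ z) (g₂ z) = 0)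
    (hnz : ∃ z ∈ U, f₁ z ≠ 0 ∨ f₂ z ≠ 0)
    (hindep : ∀ a b : ℂ, (∀ z ∈ U, a * f₁ z + b * f₂ z = 0) → a = 0 ∧ b = 0) :
    ∃ (c₁ c₂ : ℝ) (z₁ : ℂ), ∀ z ∈ U,
      g₁ z = I * (c₁ : ℂ) * f₁ z - (starRingEnd ℂ) z₁ * f₂ z ∧
      g₂ z = z₁ * f₁ z + I * (c₂ : ℂ) * f₂ z :=
  stmt_3_general U hU hUc f₁ f₂ g₁ g₂ hf₁ hf₂ hg₁ hg₂ horth hindep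
end

section
/- Let f₁, f₂ : U → ℂ be holomorphic on an open set U ⊆ ℂ, let c ∈ ℝ, and set A = |f₁|² + c|f₂|². Then A·ΔA − |∇A|² = 4c·|f₁ f₂' − f₂ f₁'|², where Δ and ∇ are taken with respect to the real coordinates of z. -/
/-!
For holomorphic `f`, the real derivative of `‖f‖²` in a direction `v` is `2⟪f, v f'⟫`, and
differentiating once more along `v` gives `2 (|v|² ‖f'‖² + ⟪f, v² f''⟫)`; summing over `v = 1, I`
the second terms cancel, so `Δ‖f‖² = 4‖f'‖²`. As `Δ` is linear on `C²` functions,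
`ΔA = 4 (|f₁'|² + c |f₂'|²)` while `∇A` is `2 (f₁ conj f₁' + c f₂ conj f₂')`, and the claim reduces
to the Lagrange-type identity
`(|a|² + c|b|²)(|a'|² + c|b'|²) - |a conj a' + c b conj b'|² = c |a b' - b a'|²`.
-/

open Complex

/-- The Laplacian of a real-valued function on ℂ ≅ ℝ². -/
noncomputable def lap (F : ℂ → ℝ) (z : ℂ) : ℝ :=
  fderiv ℝ (fun w => fderiv ℝ F w 1) z 1 + fderiv ℝ (fun w => fderiv ℝ F w I) z I

/-- The squared norm of the gradient of a real-valued function on ℂ ≅ ℝ². -/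
noncomputable def gradSq (F : ℂ → ℝ) (z : ℂ) : ℝ :=
  (fderiv ℝ F z 1) ^ 2 + (fderiv ℝ F z I) ^ 2

open Filter Topology InnerProductSpace ContinuousLinearMap

section
variable {f g : ℂ → ℂ} {f' g' z : ℂ}

theorem HasDerivAt.fderiv_norm_sq_apply (hf : HasDerivAt f f' z) (v : ℂ) :
    fderiv ℝ (fun w => ‖f w‖ ^ 2) z v = 2 * ⟪f z, v * f'⟫_ℝ := by
  simp only [(hf.hasFDerivAt.restrictScalars ℝ).norm_sq.fderiv, smul_apply, comp_apply,
    coe_restrictScalars', toSpanSingleton_apply, smul_eq_mul, coe_innerSL_apply, nsmul_eq_mul,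
    Nat.cast_ofNat]

theorem HasDerivAt.fderiv_inner_apply (hf : HasDerivAt f f' z) (hg : HasDerivAt g g' z) (v : ℂ) :
    fderiv ℝ (fun w => ⟪f w, g w⟫_ℝ) z v = ⟪f z, v * g'⟫_ℝ + ⟪v * f', g z⟫_ℝ := by
  simp only [((hf.hasFDerivAt.restrictScalars ℝ).inner ℝ
      (hg.hasFDerivAt.restrictScalars ℝ)).fderiv, comp_apply, prod_apply, coe_restrictScalars',
    toSpanSingleton_apply, smul_eq_mul, fderivInnerCLM_apply]

end

theorem lap_norm_sq_of_hasDerivAt {f f' : ℂ → ℂ} {f'' z : ℂ}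
    (hf : ∀ᶠ w in 𝓝 z, HasDerivAt f (f' w) w) (hf' : HasDerivAt f' f'' z) :
    lap (fun w => ‖f w‖ ^ 2) z = 4 * ‖f' z‖ ^ 2 := by
  have second (v : ℂ) : fderiv ℝ (fun w => fderiv ℝ (fun w => ‖f w‖ ^ 2) w v) z v
      = 2 * (‖v * f' z‖ ^ 2 + ⟪f z, v * (v * f'')⟫_ℝ) := by
    have hfirst : (fun w => fderiv ℝ (fun w => ‖f w‖ ^ 2) w v) =ᶠ[𝓝 z]
        fun w => 2 * ⟪f w, v * f' w⟫_ℝ :=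
      hf.mono fun w hw => hw.fderiv_norm_sq_apply v
    have hf₀ := hf.self_of_nhds
    have hvf' := hf'.const_mul v
    have hdiff : DifferentiableAt ℝ (fun w => ⟪f w, v * f' w⟫_ℝ) z :=
      (hf₀.differentiableAt.restrictScalars ℝ).inner ℝ (hvf'.differentiableAt.restrictScalars ℝ)
    rw [hfirst.fderiv_eq, fderiv_const_mul hdiff, smul_apply, hf₀.fderiv_inner_apply hvf',
      real_inner_self_eq_norm_sq, smul_eq_mul]
    ring
  rw [lap, second, second]
  -- the terms ⟪f, v² f''⟫ cancel because 1² + I² = 0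
  simp only [one_mul, ← mul_assoc, I_mul_I, neg_one_mul, inner_neg_right, norm_mul, norm_I]
  ring

section
variable {E F : Type*} [NormedAddCommGroup E] [NormedSpace ℝ E] [NormedAddCommGroup F]
  [NormedSpace ℝ F] {φ : E → F} {x : E}

theorem ContDiffAt.eventually_differentiableAt (hφ : ContDiffAt ℝ 2 φ x) :
    ∀ᶠ y in 𝓝 x, DifferentiableAt ℝ φ y :=
  (hφ.eventually (by simp)).mono fun _ hy => hy.differentiableAt two_ne_zero

theorem ContDiffAt.differentiableAt_fderiv_apply (hφ : ContDiffAt ℝ 2 φ x) (v : E) :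
    DifferentiableAt ℝ (fun y => fderiv ℝ φ y v) x :=
  ((hφ.fderiv_right (m := 1) le_rfl).differentiableAt one_ne_zero).clm_apply
    (differentiableAt_const v)

end

theorem lap_add {F G : ℂ → ℝ} {z : ℂ} (hF : ContDiffAt ℝ 2 F z) (hG : ContDiffAt ℝ 2 G z) :
    lap (fun w => F w + G w) z = lap F z + lap G z := by
  have second (v : ℂ) : fderiv ℝ (fun w => fderiv ℝ (fun w => F w + G w) w v) z v
      = fderiv ℝ (fun w => fderiv ℝ F w v) z v + fderiv ℝ (fun w => fderiv ℝ G w v) z v := by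
    have hfirst : (fun w => fderiv ℝ (fun w => F w + G w) w v) =ᶠ[𝓝 z]
        fun w => fderiv ℝ F w v + fderiv ℝ G w v := by
      filter_upwards [hF.eventually_differentiableAt, hG.eventually_differentiableAt]
        with w hFw hGw
      rw [fderiv_fun_add hFw hGw, add_apply]
    rw [hfirst.fderiv_eq, fderiv_fun_add (hF.differentiableAt_fderiv_apply v)
      (hG.differentiableAt_fderiv_apply v), add_apply]
  rw [lap, lap, lap, second, second]
  ring

theorem lap_const_mul {F : ℂ → ℝ} {z : ℂ} (c : ℝ) (hF : ContDiffAt ℝ 2 F z) :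
    lap (fun w => c * F w) z = c * lap F z := by
  have second (v : ℂ) : fderiv ℝ (fun w => fderiv ℝ (fun w => c * F w) w v) z v
      = c * fderiv ℝ (fun w => fderiv ℝ F w v) z v := by
    have hfirst : (fun w => fderiv ℝ (fun w => c * F w) w v) =ᶠ[𝓝 z]
        fun w => c * fderiv ℝ F w v := by
      filter_upwards [hF.eventually_differentiableAt] with w hw
      rw [fderiv_const_mul hw, smul_apply, smul_eq_mul]
    rw [hfirst.fderiv_eq, fderiv_const_mul (hF.differentiableAt_fderiv_apply v), smul_apply,
      smul_eq_mul]
  rw [lap, lap, second, second]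
  ring

section
variable {f : ℂ → ℂ} {z : ℂ}

theorem AnalyticAt.contDiffAt_norm_sq (hf : AnalyticAt ℂ f z) :
    ContDiffAt ℝ 2 (fun w => ‖f w‖ ^ 2) z :=
  (hf.contDiffAt.restrict_scalars ℝ).norm_sq ℝ

theorem AnalyticAt.lap_norm_sq (hf : AnalyticAt ℂ f z) :
    lap (fun w => ‖f w‖ ^ 2) z = 4 * ‖deriv f z‖ ^ 2 :=
  lap_norm_sq_of_hasDerivAt
    (hf.eventually_analyticAt.mono fun _ hw => hw.differentiableAt.hasDerivAt)
    hf.deriv.differentiableAt.hasDerivAt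

end

theorem stmt_6 (U : Set ℂ) (hU : IsOpen U) (f₁ f₂ : ℂ → ℂ) (c : ℝ)
    (hf₁ : ∀ z ∈ U, DifferentiableAt ℂ f₁ z)
    (hf₂ : ∀ z ∈ U, DifferentiableAt ℂ f₂ z)
    (A : ℂ → ℝ)
    (hA : ∀ z, A z = ‖f₁ z‖ ^ 2 + c * ‖f₂ z‖ ^ 2) :
    ∀ z ∈ U,
      A z * lap A z - gradSq A z
        = 4 * c * ‖f₁ z * deriv f₂ z - f₂ z * deriv f₁ z‖ ^ 2 := by
  intro z hz
  have hU_nhds : ∀ᶠ w in 𝓝 z, w ∈ U := hU.mem_nhds hz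
  have h₁ : AnalyticAt ℂ f₁ z :=
    analyticAt_iff_eventually_differentiableAt.2 (hU_nhds.mono hf₁)
  have h₂ : AnalyticAt ℂ f₂ z :=
    analyticAt_iff_eventually_differentiableAt.2 (hU_nhds.mono hf₂)
  have hA' : A = fun w => ‖f₁ w‖ ^ 2 + c * ‖f₂ w‖ ^ 2 := funext hA
  have hlap : lap A z = 4 * ‖deriv f₁ z‖ ^ 2 + c * (4 * ‖deriv f₂ z‖ ^ 2) := by
    rw [hA', lap_add h₁.contDiffAt_norm_sq (contDiffAt_const.mul h₂.contDiffAt_norm_sq),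
      lap_const_mul c h₂.contDiffAt_norm_sq, h₁.lap_norm_sq, h₂.lap_norm_sq]
  have hgrad (v : ℂ) : fderiv ℝ A z v
      = 2 * ⟪f₁ z, v * deriv f₁ z⟫_ℝ + c * (2 * ⟪f₂ z, v * deriv f₂ z⟫_ℝ) := by
    have hd₁ := h₁.contDiffAt_norm_sq.differentiableAt two_ne_zero
    have hd₂ := h₂.contDiffAt_norm_sq.differentiableAt two_ne_zero
    rw [hA', fderiv_fun_add hd₁ (hd₂.const_mul c), fderiv_const_mul hd₂, add_apply, smul_apply,
      smul_eq_mul, h₁.differentiableAt.hasDerivAt.fderiv_norm_sq_apply,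
      h₂.differentiableAt.hasDerivAt.fderiv_norm_sq_apply]
  rw [gradSq, hlap, hgrad, hgrad, hA]
  simp only [Complex.inner, Complex.sq_norm, normSq_apply, mul_re, mul_im, sub_re, sub_im, conj_re,
    conj_im, one_re, one_im, I_re, I_im]
  ring
end
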